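/- Let A be a Wheeler NFA and α, β, δ ∈ Pref(L(A)) with α ≺ δ ≺ β and I_α = I_β. Then I_α = I_δ. -/

import Mathlib

/-- The co-lexicographic (strict) order on strings. -/
def ListColex {α : Type*} [LinearOrder α] (x y : List α) : Prop :=
  List.Lex (· < ·) x.reverse y.reverse

/-- A Wheeler NFA: an NFA with a linear order on states whose minimum is the initial
state `s`, `s` has no incoming edges, and the two Wheeler properties hold. -/
structure WNFA (α Q : Type*) [LinearOrder α] [LinearOrder Q] where
  δ : Q → α → Set Q
  s : Q
  F : Set Q
  s_min : ∀ q : Q, s ≤ q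
  s_no_incoming : ∀ (u : Q) (a : α), s ∉ δ u a
  wheeler_i : ∀ ⦃u₁ u₂ : Q⦄ ⦃a₁ a₂ : α⦄ ⦃v₁ v₂ : Q⦄,
    v₁ ∈ δ u₁ a₁ → v₂ ∈ δ u₂ a₂ → a₁ < a₂ → v₁ < v₂
  wheeler_ii : ∀ ⦃u₁ u₂ : Q⦄ ⦃a : α⦄ ⦃v₁ v₂ : Q⦄,
    v₁ ∈ δ u₁ a → v₂ ∈ δ u₂ a → u₁ < u₂ → v₁ ≤ v₂

namespace WNFA

variable {α Q : Type*} [LinearOrder α] [LinearOrder Q]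

/-- The transition function extended to strings. -/
def δStar (A : WNFA α Q) : Q → List α → Set Q
  | q, [] => {q}
  | q, a :: w => {p | ∃ v ∈ A.δ q a, p ∈ A.δStar v w}

/-- The language accepted by the automaton. -/
def lang (A : WNFA α Q) : Set (List α) := {w | ∃ q ∈ A.F, q ∈ A.δStar A.s w}

/-- The set of prefixes of accepted words: the strings the automaton can read. -/
def Pref (A : WNFA α Q) : Set (List α) := {x | ∃ y, x ++ y ∈ A.lang}

/-- `I_u`: the set of readable strings reaching state `u` from the initial state. -/
def Iu (A : WNFA α Q) (u : Q) : Set (List α) := {x | x ∈ A.Pref ∧ u ∈ A.δStar A.s x}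

end WNFA

/-! If `x ≺ y`, `u ∈ δ(s, x)` and `v ∈ δ(s, y)`, then either `u ≤ v` or the two states can be
exchanged (`u ∈ δ(s, y)` and `v ∈ δ(s, x)`); this follows from the Wheeler properties by
induction along the common suffix of `x` and `y`. For `q ∈ I_x = I_y` and `p ∈ I_d`, comparing
`q` with `p` on both sides of `d` forces `p = q` unless an exchange applies, and in every case
`q ∈ I_d` and `p ∈ I_x`. -/

namespace WNFA

variable {α Q : Type*} [LinearOrder α] [LinearOrder Q] (A : WNFA α Q)

lemma mem_δStar_append {q p : Q} (w₁ w₂ : List α) :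
    p ∈ A.δStar q (w₁ ++ w₂) ↔ ∃ r ∈ A.δStar q w₁, p ∈ A.δStar r w₂ := by
  induction w₁ generalizing q with
  | nil => simp [δStar]
  | cons a w ih =>
    simp only [List.cons_append, δStar, Set.mem_ofPred_eq, ih]
    exact ⟨fun ⟨v, hv, r, hr, hp⟩ => ⟨r, ⟨v, hv, hr⟩, hp⟩,
      fun ⟨r, ⟨v, hv, hr⟩, hp⟩ => ⟨v, hv, r, hr, hp⟩⟩

lemma mem_δStar_append_singleton {q p : Q} (w : List α) (a : α) :
    p ∈ A.δStar q (w ++ [a]) ↔ ∃ r ∈ A.δStar q w, p ∈ A.δ r a := by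
  simp [mem_δStar_append, δStar]

lemma δStar_nonempty_of_mem_Pref {x : List α} (hx : x ∈ A.Pref) :
    (A.δStar A.s x).Nonempty := by
  obtain ⟨z, q, -, hq⟩ := hx
  obtain ⟨r, hr, -⟩ := (A.mem_δStar_append x z).mp hq
  exact ⟨r, hr⟩

lemma le_or_mem_swap_of_lex_reverse {xr yr : List α} (h : List.Lex (· < ·) xr yr)
    {u v : Q} (hu : u ∈ A.δStar A.s xr.reverse) (hv : v ∈ A.δStar A.s yr.reverse) :
    u ≤ v ∨ (u ∈ A.δStar A.s yr.reverse ∧ v ∈ A.δStar A.s xr.reverse) := by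
  induction h generalizing u v with
  | nil =>
    obtain rfl : u = A.s := hu
    exact Or.inl (A.s_min v)
  | @cons a xr yr _ ih =>
    simp only [List.reverse_cons, mem_δStar_append_singleton] at hu hv ⊢
    obtain ⟨u', hu', hua⟩ := hu
    obtain ⟨v', hv', hva⟩ := hv
    -- if the predecessors can be swapped (in particular if they coincide), so can `u` and `v`
    rcases ih hu' hv' with hlt | ⟨hu'y, hv'x⟩
    · rcases hlt.lt_or_eq with hlt | rfl
      · exact Or.inl (A.wheeler_ii hua hva hlt)
      · exact Or.inr ⟨⟨u', hv', hua⟩, ⟨u', hu', hva⟩⟩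
    · exact Or.inr ⟨⟨u', hu'y, hua⟩, ⟨v', hv'x, hva⟩⟩
  | rel hab =>
    simp only [List.reverse_cons, mem_δStar_append_singleton] at hu hv
    obtain ⟨_, -, hua⟩ := hu
    obtain ⟨_, -, hva⟩ := hv
    exact Or.inl (A.wheeler_i hua hva hab).le

lemma le_or_mem_swap_of_colex {x y : List α} (h : ListColex x y) {u v : Q}
    (hu : u ∈ A.δStar A.s x) (hv : v ∈ A.δStar A.s y) :
    u ≤ v ∨ (u ∈ A.δStar A.s y ∧ v ∈ A.δStar A.s x) := by
  simpa only [List.reverse_reverse] using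
    A.le_or_mem_swap_of_lex_reverse h (x.reverse_reverse.symm ▸ hu) (y.reverse_reverse.symm ▸ hv)

variable {x d y : List α} {p q : Q}

lemma mem_δStar_of_between (hxd : ListColex x d) (hdy : ListColex d y)
    (hqx : q ∈ A.δStar A.s x) (hqy : q ∈ A.δStar A.s y)
    (hp : p ∈ A.δStar A.s d) : q ∈ A.δStar A.s d := by
  rcases A.le_or_mem_swap_of_colex hxd hqx hp with hqp | ⟨hqd, -⟩
  · rcases A.le_or_mem_swap_of_colex hdy hp hqy with hpq | ⟨-, hqd⟩
    · exact le_antisymm hqp hpq ▸ hp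
    · exact hqd
  · exact hqd

lemma mem_δStar_union_of_between (hxd : ListColex x d) (hdy : ListColex d y)
    (hqx : q ∈ A.δStar A.s x) (hqy : q ∈ A.δStar A.s y)
    (hp : p ∈ A.δStar A.s d) : p ∈ A.δStar A.s x ∪ A.δStar A.s y := by
  rcases A.le_or_mem_swap_of_colex hxd hqx hp with hqp | ⟨-, hpx⟩
  · rcases A.le_or_mem_swap_of_colex hdy hp hqy with hpq | ⟨hpy, -⟩
    · exact Or.inl (le_antisymm hpq hqp ▸ hqx)
    · exact Or.inr hpy
  · exact Or.inl hpx

end WNFA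

theorem Ialpha_eq_of_between_general {α Q : Type*} [LinearOrder α] [LinearOrder Q]
    (A : WNFA α Q) (x d y : List α)
    (hx : x ∈ A.Pref) (hd : d ∈ A.Pref)
    (hxd : ListColex x d) (hdy : ListColex d y)
    (hxy : A.δStar A.s x = A.δStar A.s y) :
    A.δStar A.s x = A.δStar A.s d := by
  obtain ⟨p, hp⟩ := A.δStar_nonempty_of_mem_Pref hd
  obtain ⟨q₀, hq₀⟩ := A.δStar_nonempty_of_mem_Pref hx
  ext q
  refine ⟨fun hq => A.mem_δStar_of_between hxd hdy hq (hxy ▸ hq) hp, fun hq => ?_⟩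
  simpa [← hxy] using A.mem_δStar_union_of_between hxd hdy hq₀ (hxy ▸ hq₀) hq

/-- In a Wheeler NFA, if `x ≺ d ≺ y` are readable strings and `I_x = I_y`,
then `I_x = I_d`. -/
theorem Ialpha_eq_of_between {α Q : Type*} [LinearOrder α] [LinearOrder Q]
    (A : WNFA α Q) (x d y : List α)
    (hx : x ∈ A.Pref) (hd : d ∈ A.Pref) (hy : y ∈ A.Pref)
    (hxd : ListColex x d) (hdy : ListColex d y)
    (hxy : A.δStar A.s x = A.δStar A.s y) :
    A.δStar A.s x = A.δStar A.s d :=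
  Ialpha_eq_of_between_general A x d y hx hd hxd hdy hxy
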